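/- Fix α ∈ [0, 1/2) and let p : ℕ → ℕ be polynomially bounded, i.e., there exists d ∈ ℕ with p(n) ≤ n^d + d for all n. For each n, let c be a uniformly random Boolean function from {0,1}^n to {0,1}, let x_1, …, x_{p(n)} be i.i.d. uniform samples from {0,1}^n independent of c, and let T^c_{p(n)} = ((x_1, c(x_1)), …, (x_{p(n)}, c(x_{p(n)}))). Then ε(n, α) := sup_W P( W(T^c_{p(n)}) ∈ B(c, α) ), where the supremum is over all randomized estimators W mapping elements of ({0,1}^n × {0,1})^{p(n)} to probability distributions over Boolean functions on {0,1}^n, tends to 0 as n → ∞. -/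

import Mathlib

/-!
A training set reveals `c` only at the `p(n)` sample points, so an estimator's output
distribution is the same for all `c` that agree there. Counting, for each output `c'`, the
functions `c` with `c' ∈ B(c, α)` bounds the success probability by
`2^{p(n)} |B(α)| / 2^{2^n}`, where `|B(α)|` is the volume of a Hamming ball of radius
`α 2^n` in `{0,1}^{2^n}`. The Chernoff-type bound `|B(α)| ≤ ((1 + l) l^{-α})^{2^n}`
(for `0 < l ≤ 1`) with `l = 1 / (2(1 - α))` makes this `2^{p(n)} ρ^{2^n}` with `ρ < 1`,
and a doubly exponential decay beats the polynomially bounded exponent `p(n)`.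
-/

open scoped Classical

/-- The set `B(c, α)` of Boolean functions on `{0,1}^n` differing from `c`
on at most `α·2^n` inputs. -/
noncomputable def ball (n : ℕ) (c : (Fin n → Bool) → Bool) (α : ℝ) :
    Finset ((Fin n → Bool) → Bool) :=
  Finset.univ.filter
    (fun c' => ((Finset.univ.filter (fun x : Fin n → Bool => c' x ≠ c x)).card : ℝ) ≤ α * 2 ^ n)

/-- The training set `T^c_p = ((x_1, c(x_1)), …, (x_p, c(x_p)))`. -/
def trainSet (n p : ℕ) (c : (Fin n → Bool) → Bool) (x : Fin p → (Fin n → Bool)) :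
    Fin p → ((Fin n → Bool) × Bool) :=
  fun i => (x i, c (x i))

/-- The probability, over a uniformly random Boolean function `c` on `{0,1}^n`, over `p`
i.i.d. uniform samples `x_1, …, x_p` from `{0,1}^n`, and over the internal randomness of
the randomized estimator `W`, that `W(T^c_p) ∈ B(c, α)`. -/
noncomputable def probEstimator (n p : ℕ) (α : ℝ)
    (W : (Fin p → ((Fin n → Bool) × Bool)) → PMF ((Fin n → Bool) → Bool)) : ℝ :=
  (∑ c : (Fin n → Bool) → Bool, ∑ x : Fin p → (Fin n → Bool),
      ∑ c' ∈ ball n c α, ((W (trainSet n p c x)) c').toReal)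
    / ((Fintype.card ((Fin n → Bool) → Bool) : ℝ) * (Fintype.card (Fin n → Bool) : ℝ) ^ p)

open Finset Filter Topology

theorem sum_pow_hammingDist {ι β : Type*} [Fintype ι] [Fintype β] [DecidableEq β]
    (f : ι → β) (l : ℝ) :
    ∑ g : ι → β, l ^ hammingDist f g = (1 + (Fintype.card β - 1) * l) ^ Fintype.card ι := by
  have hg : ∀ g : ι → β, l ^ hammingDist f g = ∏ i, if f i ≠ g i then l else 1 := by
    intro g
    rw [hammingDist, ← prod_filter, prod_const]
  have hi : ∀ i, ∑ b : β, (if f i ≠ b then l else 1) = 1 + (Fintype.card β - 1) * l := by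
    intro i
    have hb : ∀ b, (if f i ≠ b then l else 1) = l + if f i = b then 1 - l else 0 := by
      intro b
      by_cases h : f i = b <;> simp [h]
    simp only [hb, sum_add_distrib, sum_const, card_univ, nsmul_eq_mul, Fintype.sum_ite_eq]
    ring
  simp_rw [hg, ← Fintype.prod_sum (fun i b => if f i ≠ b then l else 1), hi, prod_const,
    card_univ]

theorem card_hammingBall_mul_rpow_le {ι β : Type*} [Fintype ι] [Fintype β] [DecidableEq β]
    (f : ι → β) {l : ℝ} (hl0 : 0 < l) (hl1 : l ≤ 1) (r : ℝ) :
    (#{g | (hammingDist f g : ℝ) ≤ r} : ℝ) * l ^ r ≤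
      (1 + (Fintype.card β - 1) * l) ^ Fintype.card ι := by
  rw [← sum_pow_hammingDist, ← nsmul_eq_mul, ← sum_const]
  calc ∑ g ∈ {g | (hammingDist f g : ℝ) ≤ r}, l ^ r
      ≤ ∑ g ∈ {g | (hammingDist f g : ℝ) ≤ r}, l ^ hammingDist f g := by
        gcongr with g hg
        rw [← Real.rpow_natCast]
        exact Real.rpow_le_rpow_of_exponent_ge hl0 hl1 (mem_filter.1 hg).2
    _ ≤ ∑ g, l ^ hammingDist f g :=
        sum_le_sum_of_subset_of_nonneg (filter_subset _ _) fun _ _ _ => by positivity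

theorem PMF.sum_sum_toReal_le {γ ι : Type*} [Fintype γ] [DecidableEq γ] (Q : PMF γ)
    (S : Finset ι) (A : ι → Finset γ) {K : ℝ}
    (hK : ∀ g, (#{i ∈ S | g ∈ A i} : ℝ) ≤ K) :
    ∑ i ∈ S, ∑ g ∈ A i, (Q g).toReal ≤ K :=
  calc ∑ i ∈ S, ∑ g ∈ A i, (Q g).toReal
      = ∑ g, #{i ∈ S | g ∈ A i} * (Q g).toReal := by
        rw [sum_comm' (t' := univ) (s' := fun g => {i ∈ S | g ∈ A i}) (by simp)]
        simp
    _ ≤ ∑ g, K * (Q g).toReal := by gcongr with g; exact hK g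
    _ = K := by
      rw [← mul_sum, ← ENNReal.toReal_sum fun g _ => Q.apply_ne_top g,
        ← tsum_fintype (L := .unconditional _), Q.tsum_coe, ENNReal.toReal_one, mul_one]

section Estimator

variable {n q : ℕ} {α : ℝ}

theorem mem_ball {c c' : (Fin n → Bool) → Bool} :
    c' ∈ ball n c α ↔ (hammingDist c' c : ℝ) ≤ α * 2 ^ n := by
  simp [ball, hammingDist]

theorem mem_ball_comm {c c' : (Fin n → Bool) → Bool} :
    c' ∈ ball n c α ↔ c ∈ ball n c' α := by
  rw [mem_ball, mem_ball, hammingDist_comm]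

theorem card_ball_le (c : (Fin n → Bool) → Bool) {l : ℝ} (hl0 : 0 < l) (hl1 : l ≤ 1) :
    (#(ball n c α) : ℝ) ≤ ((1 + l) * l ^ (-α)) ^ 2 ^ n := by
  have h : (#(ball n c α) : ℝ) * l ^ (α * 2 ^ n) ≤ (1 + l) ^ 2 ^ n := by
    convert card_hammingBall_mul_rpow_le c hl0 hl1 (α * 2 ^ n) using 4
    · ext g
      rw [mem_ball_comm, mem_ball, mem_filter, hammingDist_comm]
      simp
    · norm_num
    · simp
  have hpow : l ^ (α * 2 ^ n) = (l ^ α) ^ 2 ^ n := by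
    rw [← Real.rpow_mul_natCast hl0.le]
    push_cast
    rfl
  rw [hpow] at h
  rw [mul_pow, Real.rpow_neg hl0.le, inv_pow, ← div_eq_mul_inv, le_div_iff₀ (by positivity)]
  exact h

theorem sum_sum_ball_trainSet_le
    (W : (Fin q → (Fin n → Bool) × Bool) → PMF ((Fin n → Bool) → Bool))
    (x : Fin q → Fin n → Bool) {V : ℝ} (hV : ∀ c, (#(ball n c α) : ℝ) ≤ V) :
    ∑ c, ∑ c' ∈ ball n c α, (W (trainSet n q c x) c').toReal ≤ 2 ^ q * V := by
  -- The estimator sees only the labels `c ∘ x`, so on each fibre of `c ↦ c ∘ x` it outputs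
  -- one fixed distribution, which can charge `ball n c α` for at most `V` functions `c` of
  -- the fibre.
  rw [← sum_fiberwise univ (fun c => c ∘ x)]
  calc _ ≤ ∑ _r : Fin q → Bool, V := sum_le_sum fun r _ => ?_
    _ = 2 ^ q * V := by simp
  have htrain : ∀ c, c ∘ x = r → trainSet n q c x = fun i => (x i, r i) := by
    rintro c rfl
    rfl
  rw [sum_congr rfl fun c hc => by rw [htrain c (mem_filter.1 hc).2]]
  refine PMF.sum_sum_toReal_le _ _ _ fun c' => le_trans (Nat.cast_le.2 (card_le_card ?_)) (hV c')
  exact fun c hc => mem_ball_comm.1 (mem_filter.1 hc).2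

theorem probEstimator_nonneg
    (W : (Fin q → (Fin n → Bool) × Bool) → PMF ((Fin n → Bool) → Bool)) :
    0 ≤ probEstimator n q α W := by
  unfold probEstimator
  positivity

theorem probEstimator_le_of_card_ball_le
    (W : (Fin q → (Fin n → Bool) × Bool) → PMF ((Fin n → Bool) → Bool))
    {V : ℝ} (hV : ∀ c, (#(ball n c α) : ℝ) ≤ V) :
    probEstimator n q α W ≤ 2 ^ q * V / 2 ^ 2 ^ n := by
  have hsum := sum_le_card_nsmul univ _ _ fun x _ => sum_sum_ball_trainSet_le W x hV
  rw [sum_comm] at hsum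
  simp only [card_univ, Fintype.card_fun, Fintype.card_fin, Fintype.card_bool, nsmul_eq_mul]
    at hsum
  rw [probEstimator, div_le_div_iff₀ (by positivity) (by positivity)]
  simp only [Fintype.card_fun, Fintype.card_fin, Fintype.card_bool]
  push_cast at hsum ⊢
  calc _ ≤ (2 ^ n) ^ q * (2 ^ q * V) * 2 ^ 2 ^ n := by gcongr
    _ = _ := by ring

end Estimator

theorem exists_one_add_mul_rpow_neg_lt_two {α : ℝ} (hα0 : 0 ≤ α) (hα1 : α < 1 / 2) :
    ∃ l : ℝ, 0 < l ∧ l ≤ 1 ∧ (1 + l) * l ^ (-α) < 2 := by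
  set l := (2 * (1 - α))⁻¹
  have hl0 : 0 < l := inv_pos.2 (by linarith)
  have hl : l * (2 * (1 - α)) = 1 := inv_mul_cancel₀ (by linarith)
  have hbernoulli : l ^ (-α) ≤ 1 + α * (1 - 2 * α) := by
    rw [Real.rpow_neg hl0.le, ← Real.inv_rpow hl0.le, inv_inv]
    convert rpow_one_add_le_one_add_mul_self (s := 1 - 2 * α) (by linarith) hα0 (by linarith)
      using 2
    ring
  refine ⟨l, hl0, inv_le_one_of_one_le₀ (by linarith), ?_⟩
  -- `(1 + l) * (1 + α * (1 - 2 * α)) = 2 - 2 * (1 / 2 - α) ^ 2`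
  calc (1 + l) * l ^ (-α) ≤ (1 + l) * (1 + α * (1 - 2 * α)) := by gcongr
    _ < 2 := by nlinarith

theorem tendsto_two_pow_mul_pow_two_pow {ρ : ℝ} (hρ0 : 0 < ρ) (hρ1 : ρ < 1) (d : ℕ) :
    Tendsto (fun n : ℕ => (2 : ℝ) ^ (n ^ d + d) * ρ ^ 2 ^ n) atTop (𝓝 0) := by
  have hratio : Tendsto (fun n : ℕ => (n : ℝ) ^ d / 2 ^ n * Real.log 2 + Real.log ρ) atTop
      (𝓝 (Real.log ρ)) := by
    simpa using ((tendsto_pow_const_div_const_pow_of_one_lt d one_lt_two).mul_const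
      (Real.log 2)).add_const (Real.log ρ)
  have hexponent : Tendsto (fun n : ℕ => (n : ℝ) ^ d * Real.log 2 + 2 ^ n * Real.log ρ) atTop
      atBot := by
    refine ((tendsto_pow_atTop_atTop_of_one_lt one_lt_two).atTop_mul_neg
      (Real.log_neg hρ0 hρ1) hratio).congr fun n => ?_
    field_simp
  have hexp := (Real.tendsto_exp_atBot.comp hexponent).const_mul ((2 : ℝ) ^ d)
  rw [mul_zero] at hexp
  refine hexp.congr fun n => ?_
  have hexp_mul_log : ∀ (m : ℕ) {x : ℝ}, 0 < x → Real.exp (m * Real.log x) = x ^ m :=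
    fun m x hx => by rw [Real.exp_nat_mul, Real.exp_log hx]
  have htwo_pow : (2 : ℝ) ^ n = ((2 ^ n : ℕ) : ℝ) := by push_cast; rfl
  simp only [Function.comp, Real.exp_add, pow_add]
  rw [htwo_pow, ← Nat.cast_pow, hexp_mul_log _ two_pos, hexp_mul_log _ hρ0]
  ring

/-- For `α ∈ [0, 1/2)` and a polynomially bounded sample size `p(n)`, the best success
probability `ε(n, α) = sup_W P(W(T^c_{p(n)}) ∈ B(c, α))` over all randomized estimators
tends to `0` as `n → ∞`. -/
theorem stmt8 (α : ℝ) (hα0 : 0 ≤ α) (hα1 : α < 1 / 2)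
    (p : ℕ → ℕ) (d : ℕ) (hp : ∀ n, p n ≤ n ^ d + d) :
    Filter.Tendsto
      (fun n =>
        ⨆ W : (Fin (p n) → ((Fin n → Bool) × Bool)) → PMF ((Fin n → Bool) → Bool),
          probEstimator n (p n) α W)
      Filter.atTop (nhds 0) := by
  obtain ⟨l, hl0, hl1, hl⟩ := exists_one_add_mul_rpow_neg_lt_two hα0 hα1
  set ρ := (1 + l) * l ^ (-α) / 2
  have hρ0 : 0 < ρ := by positivity
  have hbound : ∀ n W, probEstimator n (p n) α W ≤ 2 ^ (n ^ d + d) * ρ ^ 2 ^ n := by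
    intro n W
    calc probEstimator n (p n) α W ≤ 2 ^ p n * ((1 + l) * l ^ (-α)) ^ 2 ^ n / 2 ^ 2 ^ n :=
          probEstimator_le_of_card_ball_le W fun c => card_ball_le c hl0 hl1
      _ = 2 ^ p n * ρ ^ 2 ^ n := by rw [div_pow, mul_div_assoc]
      _ ≤ 2 ^ (n ^ d + d) * ρ ^ 2 ^ n := by gcongr; exacts [one_le_two, hp n]
  refine squeeze_zero (fun n => Real.iSup_nonneg fun W => probEstimator_nonneg W)
    (fun n => Real.iSup_le (hbound n) (by positivity)) ?_
  exact tendsto_two_pow_mul_pow_two_pow hρ0 ((div_lt_one two_pos).2 hl) d
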